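/- The map α ↦ α̂, which replaces every maximal block of consecutive parts equal to 1 (not occurring at the end) by their sum added to the next part to the right, and merges a trailing block of 1's into a single last part, is a surjection from the set of compositions of n onto the set of peak compositions of n. -/

import Mathlib

/-! Collapsing only regroups parts, so it preserves the sum. A peak composition has no part 1
except possibly its last one, so collapsing fixes it: it is its own preimage. -/

/-- The collapsing map `α ↦ α̂`: each maximal run of consecutive parts equal to 1
is merged into the next part to the right (a trailing run of `r` ones becomes a
single part `r`). -/
def collapse : List ℕ → List ℕ
  | [] => []
  | 1 :: rest =>
    match collapse rest with
    | [] => [1]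
    | b :: t => (b + 1) :: t
  | a :: rest => a :: collapse rest

/-- A peak composition: all parts except possibly the last exceed 1. -/
def IsPeakComp (l : List ℕ) : Prop :=
  (∀ x ∈ l, 0 < x) ∧ ∀ i, i + 1 < l.length → 1 < l.getD i 0

theorem collapse_cons_of_ne_one {a : ℕ} (ha : a ≠ 1) (l : List ℕ) :
    collapse (a :: l) = a :: collapse l :=
  collapse.eq_3 a l ha

theorem collapse_one_cons_of_collapse_eq_nil {l : List ℕ} (h : collapse l = []) :
    collapse (1 :: l) = [1] := by
  rw [collapse.eq_2, h]

theorem collapse_one_cons_of_collapse_eq_cons {l t : List ℕ} {b : ℕ} (h : collapse l = b :: t) :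
    collapse (1 :: l) = (b + 1) :: t := by
  rw [collapse.eq_2, h]

theorem sum_collapse_eq_sum (l : List ℕ) : (collapse l).sum = l.sum := by
  induction l with
  | nil => rfl
  | cons a l ih =>
    by_cases ha : a = 1
    · subst ha
      rcases h : collapse l with _ | ⟨b, t⟩
      · rw [collapse_one_cons_of_collapse_eq_nil h, List.sum_cons, List.sum_cons, ← ih, h]
      · rw [collapse_one_cons_of_collapse_eq_cons h, List.sum_cons, List.sum_cons, ← ih, h,
          List.sum_cons]
        ring
    · rw [collapse_cons_of_ne_one ha, List.sum_cons, List.sum_cons, ih]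

theorem isPeakComp_nil : IsPeakComp [] :=
  ⟨by simp, by simp⟩

theorem isPeakComp_cons {a : ℕ} {l : List ℕ} :
    IsPeakComp (a :: l) ↔ 0 < a ∧ (l ≠ [] → 1 < a) ∧ IsPeakComp l := by
  simp only [IsPeakComp, List.forall_mem_cons, List.length_cons, Nat.add_lt_add_iff_right]
  constructor
  · rintro ⟨⟨ha, hl⟩, hget⟩
    refine ⟨ha, fun hne => ?_, hl, fun i hi => ?_⟩
    · simpa using hget 0 (List.length_pos_iff.mpr hne)
    · simpa using hget (i + 1) hi
  · rintro ⟨ha, hlast, hl, hget⟩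
    refine ⟨⟨ha, hl⟩, fun i hi => ?_⟩
    cases i with
    | zero => simpa using hlast (List.length_pos_iff.mp hi)
    | succ i => simpa using hget i hi

theorem isPeakComp_singleton {a : ℕ} (ha : 0 < a) : IsPeakComp [a] :=
  isPeakComp_cons.mpr ⟨ha, fun h => absurd rfl h, isPeakComp_nil⟩

theorem isPeakComp_collapse {l : List ℕ} (hl : ∀ x ∈ l, 0 < x) : IsPeakComp (collapse l) := by
  induction l with
  | nil => exact isPeakComp_nil
  | cons a l ih =>
    rw [List.forall_mem_cons] at hl
    have hpeak := ih hl.2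
    by_cases ha : a = 1
    · subst ha
      rcases h : collapse l with _ | ⟨b, t⟩
      · rw [collapse_one_cons_of_collapse_eq_nil h]
        exact isPeakComp_singleton one_pos
      · rw [h, isPeakComp_cons] at hpeak
        rw [collapse_one_cons_of_collapse_eq_cons h, isPeakComp_cons]
        exact ⟨by omega, fun _ => by omega, hpeak.2.2⟩
    · rw [collapse_cons_of_ne_one ha, isPeakComp_cons]
      exact ⟨hl.1, fun _ => by omega, hpeak⟩

theorem IsPeakComp.collapse_eq {p : List ℕ} (hp : IsPeakComp p) : collapse p = p := by
  induction p with
  | nil => rfl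
  | cons a p ih =>
    obtain ⟨-, hlast, hp⟩ := isPeakComp_cons.mp hp
    by_cases ha1 : a = 1
    · subst ha1
      obtain rfl : p = [] := by by_contra hne; exact absurd (hlast hne) (lt_irrefl 1)
      rfl
    · rw [collapse_cons_of_ne_one ha1, ih hp]

/-- The map `α ↦ α̂` is a surjection from compositions of `n` onto peak
compositions of `n`. -/
theorem stmt7 (n : ℕ) :
    (∀ l : List ℕ, (∀ x ∈ l, 0 < x) → l.sum = n →
      (collapse l).sum = n ∧ IsPeakComp (collapse l)) ∧
    (∀ p : List ℕ, IsPeakComp p → p.sum = n →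
      ∃ l : List ℕ, (∀ x ∈ l, 0 < x) ∧ l.sum = n ∧ collapse l = p) :=
  ⟨fun l hl hsum => ⟨(sum_collapse_eq_sum l).trans hsum, isPeakComp_collapse hl⟩,
    fun p hp hsum => ⟨p, hp.1, hsum, hp.collapse_eq⟩⟩
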